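/- For every root λ, the subgraph of the Coxeter graph induced on the support supp(λ) is connected. -/

import Mathlib

open Real

variable {B : Type*}

/-- The pairing constant `⟨α_s, α_t⟩` of the standard bilinear form:
`-cos (π / M s t)` if `M s t ≠ 0`, and `-1` if `M s t = 0` (i.e. `m_{s,t} = ∞`). -/
noncomputable def pairing (M : CoxeterMatrix B) (s t : B) : ℝ :=
  if M s t = 0 then -1 else -Real.cos (Real.pi / (M s t : ℝ))

/-- The standard symmetric bilinear form on `V = B → ℝ`. -/
noncomputable def form [Fintype B] (M : CoxeterMatrix B) (v w : B → ℝ) : ℝ :=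
  ∑ s, ∑ t, v s * w t * pairing M s t

/-- The simple root `α_s`, i.e. the standard basis vector at `s`. -/
noncomputable def sroot [DecidableEq B] (s : B) : B → ℝ := Pi.single s 1

/-- `λ` is a root: `λ = ρ(w) α_s` for some `w ∈ W`, `s ∈ B`. -/
def IsRoot [DecidableEq B] (M : CoxeterMatrix B)
    (ρ : M.Group →* Module.End ℝ (B → ℝ)) (lam : B → ℝ) : Prop :=
  ∃ (w : M.Group) (s : B), ρ w (sroot s) = lam

/-- `λ` is positive: all coordinates are nonnegative. -/
def IsPos (lam : B → ℝ) : Prop := ∀ s, 0 ≤ lam s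

/-- `λ` is negative: all coordinates are nonpositive. -/
def IsNeg (lam : B → ℝ) : Prop := ∀ s, lam s ≤ 0

/-- `λ` is a positive root. -/
def IsPosRoot [DecidableEq B] (M : CoxeterMatrix B)
    (ρ : M.Group →* Module.End ℝ (B → ℝ)) (lam : B → ℝ) : Prop :=
  IsRoot M ρ lam ∧ IsPos lam

/-- `λ` dominates `μ`: for every `w ∈ W`, if `ρ(w) μ` is positive then so is `ρ(w) λ`. -/
def Dominates (M : CoxeterMatrix B)
    (ρ : M.Group →* Module.End ℝ (B → ℝ)) (lam mu : B → ℝ) : Prop :=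
  ∀ w : M.Group, IsPos (ρ w mu) → IsPos (ρ w lam)

/-- `λ` is a minimal root: a positive root dominating no positive root other than itself. -/
def IsMinimal [DecidableEq B] (M : CoxeterMatrix B)
    (ρ : M.Group →* Module.End ℝ (B → ℝ)) (lam : B → ℝ) : Prop :=
  IsPosRoot M ρ lam ∧
    ∀ mu, IsPosRoot M ρ mu → Dominates M ρ lam mu → mu = lam

/-- The depth `δ(λ)` of a positive root:
the least Coxeter length of a `w ∈ W` with `ρ(w⁻¹) λ` negative. -/
noncomputable def depth (M : CoxeterMatrix B)
    (ρ : M.Group →* Module.End ℝ (B → ℝ)) (lam : B → ℝ) : ℕ :=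
  sInf {n | ∃ w : M.Group, IsNeg (ρ w⁻¹ lam) ∧ M.toCoxeterSystem.length w = n}

/-- The partial order `λ ⪯ μ` on positive roots:
`μ = ρ(w) λ` for some `w` with `δ(μ) = ℓ(w) + δ(λ)`. -/
def PLE (M : CoxeterMatrix B)
    (ρ : M.Group →* Module.End ℝ (B → ℝ)) (lam mu : B → ℝ) : Prop :=
  ∃ w : M.Group, mu = ρ w lam ∧
    depth M ρ mu = M.toCoxeterSystem.length w + depth M ρ lam

/-- The Coxeter graph of `M`: distinct `s`, `t` are adjacent iff `M s t ≥ 3` or `M s t = 0`. -/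
def coxGraph (M : CoxeterMatrix B) : SimpleGraph B where
  Adj s t := s ≠ t ∧ (M s t = 0 ∨ 3 ≤ M s t)
  symm := by
    constructor
    intro s t h
    exact ⟨h.1.symm, by rw [M.symmetric t s]; exact h.2⟩
  loopless := by constructor; intro s h; exact h.1 rfl

/-- The support of a vector `λ ∈ V`. -/
def supp (lam : B → ℝ) : Set B := {s | lam s ≠ 0}

/-!
A root is `±ρ(w) α_s` with `ℓ(w s) > ℓ(w)`, and for such `w` we show by induction on `ℓ(w)`
that `ρ(w) α_s` is positive with connected support, along the classical proof of positivity.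
For a right descent `t` of `w`, factor `w = u v` with `v` a word in `s, t`,
`ℓ(w) = ℓ(u) + |v|`, and neither `s` nor `t` a right descent of `u`. As `v s` is still reduced,
`v` is the alternating word of length `k` ending in `t`, with `k < m(s,t)`, and the Chebyshev
recursion gives `ρ(v) α_s = a α_s + b α_t` with `{a, b} = {U_k(c), U_{k-1}(c)}`,
`c = -⟨α_s, α_t⟩`, both nonnegative. So `ρ(w) α_s` is a nonnegative combination of
`ρ(u) α_s` and `ρ(u) α_t`, which are positive with connected supports by induction. If `s, t`
are adjacent, `⟨ρ(u) α_s, ρ(u) α_t⟩ = ⟨α_s, α_t⟩ < 0` forces an edge between the two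
supports; otherwise `m(s,t) = 2` and `v` fixes `α_s`.
-/

open CoxeterSystem Polynomial.Chebyshev

namespace CoxeterSystem

variable {W : Type*} [Group W] {M : CoxeterMatrix B} (cs : CoxeterSystem M W)

theorem exists_dihedral_factorization (s t : B) (w : W) :
    ∃ (u : W) (ω : List B), (∀ i ∈ ω, i = s ∨ i = t) ∧ w = u * cs.wordProd ω ∧
      cs.length w = cs.length u + ω.length ∧ ¬cs.IsRightDescent u s ∧ ¬cs.IsRightDescent u t := by
  suffices h : ∀ (u : W) (ω : List B), (∀ i ∈ ω, i = s ∨ i = t) → w = u * cs.wordProd ω →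
      cs.length w = cs.length u + ω.length → ∃ (u : W) (ω : List B), (∀ i ∈ ω, i = s ∨ i = t) ∧
        w = u * cs.wordProd ω ∧ cs.length w = cs.length u + ω.length ∧
        ¬cs.IsRightDescent u s ∧ ¬cs.IsRightDescent u t from
    h w [] (by simp) (by simp) (by simp)
  intro u
  induction hn : cs.length u using Nat.strong_induction_on generalizing u with
  | _ n ih =>
  intro ω hω hw hlen
  by_cases hdesc : ∃ r, (r = s ∨ r = t) ∧ cs.IsRightDescent u r
  · obtain ⟨r, hr, hur⟩ := hdesc
    have hlen' := cs.isRightDescent_iff.mp hur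
    refine ih _ (by omega) (u * cs.simple r) rfl (r :: ω) ?_ ?_ ?_
    · simpa [hr] using hω
    · simp [hw, mul_assoc, wordProd_cons]
    · simp only [List.length_cons]; omega
  · push Not at hdesc
    exact ⟨u, ω, hω, hw, by omega, hdesc s (Or.inl rfl), hdesc t (Or.inr rfl)⟩

theorem isReduced_concat_of_not_isRightDescent {w u : W} {ω : List B} {s : B}
    (hw : w = u * cs.wordProd ω) (hlen : cs.length w = cs.length u + ω.length)
    (hs : ¬cs.IsRightDescent w s) : cs.IsReduced (ω.concat s) := by
  have hws := cs.not_isRightDescent_iff.mp hs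
  have hle := cs.length_wordProd_le (ω.concat s)
  have hge := cs.length_mul_le u (cs.wordProd (ω.concat s))
  rw [wordProd_concat] at hle hge
  rw [← mul_assoc, ← hw] at hge
  simp only [IsReduced, wordProd_concat, List.length_concat] at hle ⊢
  omega

theorem eq_alternatingWord_of_isReduced_concat {s t : B} {ω : List B}
    (hω : ∀ i ∈ ω, i = s ∨ i = t) (hred : cs.IsReduced (ω.concat s)) :
    ω = alternatingWord s t ω.length := by
  induction ω using List.reverseRecOn generalizing s t with
  | nil => rfl
  | append_singleton ω x ih =>
    have hx : x = t := by
      refine (hω x (by simp)).resolve_left ?_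
      rintro rfl
      have hle := cs.length_wordProd_le ω
      simp [IsReduced, wordProd_append, wordProd_cons] at hred
      omega
    subst hx
    have hred' : cs.IsReduced (ω.concat x) := by
      simpa [List.take_append, List.take_of_length_le] using hred.take (ω.length + 1)
    have h := ih (fun i hi => (hω i (by simp [hi])).symm) hred'
    rw [List.length_append, List.length_singleton, alternatingWord_succ, ← h,
      List.concat_eq_append]

theorem le_of_isReduced_alternatingWord {i i' : B} {m : ℕ}
    (h : cs.IsReduced (alternatingWord i i' m)) : M i i' = 0 ∨ m ≤ M i i' := by
  by_contra! hm
  exact cs.not_isReduced_alternatingWord i i' hm.1 hm.2 h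

end CoxeterSystem

section Form

variable (M : CoxeterMatrix B)

theorem pairing_self (s : B) : pairing M s s = 1 := by
  simp [pairing]

theorem pairing_comm (s t : B) : pairing M s t = pairing M t s := by
  rw [pairing, pairing, M.symmetric s t]

theorem pairing_eq_zero_of_eq_two {s t : B} (h : M s t = 2) : pairing M s t = 0 := by
  simp [pairing, h]

theorem pairing_neg_of_adj {s t : B} (h : (coxGraph M).Adj s t) : pairing M s t < 0 := by
  rcases h.2 with h0 | h3
  · simp [pairing, h0]
  · have hm : (0 : ℝ) < M s t := by exact_mod_cast (show 0 < M s t by omega)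
    have hlt : π / M s t < π / 2 := by
      gcongr
      exact_mod_cast (show 2 < M s t by omega)
    rw [pairing, if_neg (by omega), neg_lt_zero]
    exact cos_pos_of_mem_Ioo ⟨by linarith [div_pos pi_pos hm], hlt⟩

theorem eq_two_of_not_adj {s t : B} (hst : s ≠ t) (h : ¬(coxGraph M).Adj s t) : M s t = 2 := by
  have := M.off_diagonal s t hst
  have h' : ¬(M s t = 0 ∨ 3 ≤ M s t) := fun h' => h ⟨hst, h'⟩
  omega

theorem coxGraph_adj_iff_pairing_neg {s t : B} : (coxGraph M).Adj s t ↔ pairing M s t < 0 := by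
  refine ⟨pairing_neg_of_adj M, fun h => ?_⟩
  have hst : s ≠ t := by rintro rfl; linarith [pairing_self M s]
  by_contra hadj
  linarith [pairing_eq_zero_of_eq_two M (eq_two_of_not_adj M hst hadj)]

theorem eval_U_neg_pairing_nonneg {s t : B} (hst : s ≠ t) {n : ℤ}
    (hn : -1 ≤ n) (hm : M s t = 0 ∨ n + 1 ≤ M s t) : 0 ≤ (U ℝ n).eval (-pairing M s t) := by
  by_cases h0 : M s t = 0
  · simp only [pairing, h0, if_true, neg_neg, U_eval_one]
    exact_mod_cast (show 0 ≤ n + 1 by omega)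
  have hm' : n + 1 ≤ M s t := hm.resolve_left h0
  have hpos : (1 : ℝ) < M s t := by
    exact_mod_cast (show 1 < M s t by have := M.off_diagonal s t hst; omega)
  have hsin : 0 < sin (π / M s t) :=
    sin_pos_of_pos_of_lt_pi (by positivity) (div_lt_self pi_pos hpos)
  rw [pairing, if_neg h0, neg_neg]
  refine nonneg_of_mul_nonneg_left ?_ hsin
  rw [U_real_cos]
  apply sin_nonneg_of_nonneg_of_le_pi
  · have : (0 : ℝ) ≤ n + 1 := by exact_mod_cast (show 0 ≤ n + 1 by omega)
    positivity
  · calc ((n : ℝ) + 1) * (π / M s t) ≤ M s t * (π / M s t) := by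
          gcongr
          exact_mod_cast hm'
      _ = π := by field_simp

variable [Fintype B]

theorem form_comm (v w : B → ℝ) : form M v w = form M w v := by
  rw [form, form, Finset.sum_comm]
  refine Finset.sum_congr rfl fun s _ => Finset.sum_congr rfl fun t _ => ?_
  rw [pairing_comm]; ring

theorem form_sub_smul_left (u v w : B → ℝ) (a : ℝ) :
    form M (u - a • v) w = form M u w - a * form M v w := by
  simp only [form, Finset.mul_sum, ← Finset.sum_sub_distrib, Pi.sub_apply, Pi.smul_apply,
    smul_eq_mul]
  refine Finset.sum_congr rfl fun s _ => Finset.sum_congr rfl fun t _ => ?_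
  ring

theorem form_sub_smul_right (u v w : B → ℝ) (a : ℝ) :
    form M u (v - a • w) = form M u v - a * form M u w := by
  rw [form_comm, form_sub_smul_left, form_comm M v, form_comm M w]

variable [DecidableEq B]

theorem form_sroot_sroot (s t : B) : form M (sroot s) (sroot t) = pairing M s t := by
  simp [form, sroot, Pi.single_apply]

theorem form_reflection_reflection (s : B) (v w : B → ℝ) :
    form M (v - (2 * form M v (sroot s)) • sroot s) (w - (2 * form M w (sroot s)) • sroot s) =
      form M v w := by
  rw [form_sub_smul_left, form_sub_smul_right, form_sub_smul_right, form_sroot_sroot,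
    pairing_self, form_comm M (sroot s) w]
  ring

end Form

section Support

theorem supp_neg (v : B → ℝ) : supp (-v) = supp v := by
  ext; simp [supp]

theorem supp_smul {a : ℝ} (ha : a ≠ 0) (v : B → ℝ) : supp (a • v) = supp v := by
  ext; simp [supp, ha]

theorem IsPos.smul_add_smul {μ ν : B → ℝ} (hμ : IsPos μ) (hν : IsPos ν) {a b : ℝ} (ha : 0 ≤ a)
    (hb : 0 ≤ b) : IsPos (a • μ + b • ν) := fun x =>
  add_nonneg (mul_nonneg ha (hμ x)) (mul_nonneg hb (hν x))

theorem supp_smul_add_smul {μ ν : B → ℝ} (hμ : IsPos μ) (hν : IsPos ν) {a b : ℝ} (ha : 0 < a)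
    (hb : 0 < b) : supp (a • μ + b • ν) = supp μ ∪ supp ν := by
  ext x
  have := hμ x
  have := hν x
  simp only [supp, Set.mem_ofPred_eq, Set.mem_union, Pi.add_apply, Pi.smul_apply, smul_eq_mul]
  constructor
  · contrapose!
    rintro ⟨h1, h2⟩
    simp [h1, h2]
  · rintro (h | h) <;> positivity

theorem exists_adj_of_form_neg [Fintype B] (M : CoxeterMatrix B) {μ ν : B → ℝ} (hμ : IsPos μ)
    (hν : IsPos ν) (h : form M μ ν < 0) : ∃ p ∈ supp μ, ∃ q ∈ supp ν, (coxGraph M).Adj p q := by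
  obtain ⟨p, q, hpq⟩ : ∃ p q, μ p * ν q * pairing M p q < 0 := by
    by_contra! hc
    exact h.not_ge (Finset.sum_nonneg fun p _ => Finset.sum_nonneg fun q _ => hc p q)
  have hμν : 0 < μ p * ν q := (mul_nonneg (hμ p) (hν q)).lt_of_ne fun h0 => by
    rw [← h0, zero_mul] at hpq
    exact hpq.false
  refine ⟨p, fun h => by simp [h] at hμν, q, fun h => by simp [h] at hμν, ?_⟩
  rw [coxGraph_adj_iff_pairing_neg]
  nlinarith

theorem connected_induce_supp_smul_add_smul [Fintype B] (M : CoxeterMatrix B) {μ ν : B → ℝ}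
    (hμ : IsPos μ) (hν : IsPos ν) (hμc : ((coxGraph M).induce (supp μ)).Connected)
    (hνc : ((coxGraph M).induce (supp ν)).Connected) (hform : form M μ ν < 0) {a b : ℝ}
    (ha : 0 ≤ a) (hb : 0 ≤ b) (hne : a • μ + b • ν ≠ 0) :
    ((coxGraph M).induce (supp (a • μ + b • ν))).Connected := by
  rcases ha.eq_or_lt with rfl | ha
  · have hb : b ≠ 0 := by rintro rfl; simp at hne
    rwa [zero_smul, zero_add, supp_smul hb]
  rcases hb.eq_or_lt with rfl | hb
  · rwa [zero_smul, add_zero, supp_smul ha.ne']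
  obtain ⟨p, hp, q, hq, hpq⟩ := exists_adj_of_form_neg M hμ hν hform
  rw [supp_smul_add_smul hμ hν ha hb]
  exact SimpleGraph.connected_induce_union hμc.preconnected hνc.preconnected hp hq hpq

theorem isPos_sroot [DecidableEq B] (s : B) : IsPos (sroot s) := by
  intro x
  by_cases h : x = s <;> simp [sroot, h]

theorem connected_induce_supp_sroot [DecidableEq B] (M : CoxeterMatrix B) (s : B) :
    ((coxGraph M).induce (supp (sroot s))).Connected := by
  have : supp (sroot s) = {s} := by ext; simp [supp, sroot, Pi.single_apply]
  rw [this, SimpleGraph.induce_singleton_eq_top]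
  exact SimpleGraph.connected_top

end Support

theorem MonoidHom.apply_eq_zero_iff_of_group {G R V : Type*} [Group G] [Semiring R]
    [AddCommMonoid V] [Module R V] (ρ : G →* Module.End R V) (g : G) {v : V} :
    ρ g v = 0 ↔ v = 0 := by
  refine ⟨fun h => ?_, fun h => by rw [h, map_zero]⟩
  simpa [← Module.End.mul_apply, ← map_mul] using congrArg (ρ g⁻¹) h

section Representation

variable [Fintype B] [DecidableEq B]

def IsGeometricRep (M : CoxeterMatrix B) (ρ : M.Group →* Module.End ℝ (B → ℝ)) : Prop :=
  ∀ (s : B) (v : B → ℝ), ρ (M.simple s) v = v - (2 * form M v (sroot s)) • sroot s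

variable {M : CoxeterMatrix B} {ρ : M.Group →* Module.End ℝ (B → ℝ)}

theorem IsGeometricRep.form_apply_apply (hρ : IsGeometricRep M ρ) (w : M.Group) (v v' : B → ℝ) :
    form M (ρ w v) (ρ w v') = form M v v' := by
  induction w using M.toCoxeterSystem.simple_induction_left with
  | one => simp
  | mul_simple_left w s ih =>
    rw [CoxeterMatrix.toCoxeterSystem_simple, map_mul, Module.End.mul_apply,
      Module.End.mul_apply, hρ, hρ, form_reflection_reflection, ih]

theorem IsGeometricRep.apply_simple_sroot (hρ : IsGeometricRep M ρ) (s t : B) :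
    ρ (M.simple t) (sroot s) = sroot s - (2 * pairing M s t) • sroot t := by
  rw [hρ, form_sroot_sroot]

theorem IsGeometricRep.apply_simple_sroot_self (hρ : IsGeometricRep M ρ) (s : B) :
    ρ (M.simple s) (sroot s) = -sroot s := by
  rw [hρ.apply_simple_sroot, pairing_self]
  module

theorem IsGeometricRep.apply_simple_smul_add_smul (hρ : IsGeometricRep M ρ) (s t : B) (a b : ℝ) :
    ρ (M.simple t) (a • sroot s + b • sroot t) =
      a • sroot s + (2 * -pairing M s t * a - b) • sroot t := by
  rw [map_add, map_smul, map_smul, hρ.apply_simple_sroot, hρ.apply_simple_sroot_self]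
  module

theorem IsGeometricRep.apply_wordProd_alternatingWord (hρ : IsGeometricRep M ρ) (s t : B)
    (k : ℕ) :
    ρ (M.toCoxeterSystem.wordProd (alternatingWord s t k)) (sroot s) =
      if Even k then
        (U ℝ k).eval (-pairing M s t) • sroot s +
          (U ℝ ((k : ℤ) - 1)).eval (-pairing M s t) • sroot t
      else
        (U ℝ ((k : ℤ) - 1)).eval (-pairing M s t) • sroot s +
          (U ℝ k).eval (-pairing M s t) • sroot t := by
  have hU (n : ℤ) : (U ℝ (n + 1)).eval (-pairing M s t) =
      2 * -pairing M s t * (U ℝ n).eval (-pairing M s t) -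
        (U ℝ (n - 1)).eval (-pairing M s t) := by
    simp [U_add_one]
  induction k with
  | zero => simp [alternatingWord]
  | succ k ih =>
    rw [alternatingWord_succ', wordProd_cons, CoxeterMatrix.toCoxeterSystem_simple, map_mul,
      Module.End.mul_apply, ih]
    by_cases hk : Even k
    · rw [if_pos hk, if_pos hk, if_neg (Nat.not_even_iff_odd.mpr hk.add_one),
        hρ.apply_simple_smul_add_smul, Nat.cast_add_one, add_sub_cancel_right, hU]
    · rw [if_neg hk, if_neg hk, if_pos (Nat.even_add_one.mpr hk), add_comm,
        hρ.apply_simple_smul_add_smul, pairing_comm M t s, Nat.cast_add_one,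
        add_sub_cancel_right, hU, add_comm]

theorem IsGeometricRep.exists_nonneg_apply_wordProd_alternatingWord (hρ : IsGeometricRep M ρ)
    {s t : B} (hst : s ≠ t) {k : ℕ} (hk : M s t = 0 ∨ k + 1 ≤ M s t) :
    ∃ a b : ℝ, 0 ≤ a ∧ 0 ≤ b ∧
      ρ (M.toCoxeterSystem.wordProd (alternatingWord s t k)) (sroot s) =
        a • sroot s + b • sroot t := by
  have hU (n : ℤ) (h1 : -1 ≤ n) (h2 : n ≤ k) : 0 ≤ (U ℝ n).eval (-pairing M s t) :=
    eval_U_neg_pairing_nonneg M hst h1 (by omega)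
  rw [hρ.apply_wordProd_alternatingWord]
  split_ifs
  · exact ⟨_, _, hU _ (by omega) le_rfl, hU _ (by omega) (by omega), rfl⟩
  · exact ⟨_, _, hU _ (by omega) (by omega), hU _ (by omega) le_rfl, rfl⟩

theorem IsGeometricRep.apply_wordProd_alternatingWord_of_eq_two (hρ : IsGeometricRep M ρ)
    {s t : B} (h : M s t = 2) {k : ℕ} (hk : k ≤ 1) :
    ρ (M.toCoxeterSystem.wordProd (alternatingWord s t k)) (sroot s) = sroot s := by
  interval_cases k
  · simp [alternatingWord]
  · simp [alternatingWord, hρ.apply_simple_sroot, pairing_eq_zero_of_eq_two M h]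

end Representation

theorem IsGeometricRep.isPos_and_connected_of_not_isRightDescent [Fintype B] [DecidableEq B]
    {M : CoxeterMatrix B} {ρ : M.Group →* Module.End ℝ (B → ℝ)} (hρ : IsGeometricRep M ρ)
    (w : M.Group) (s : B) (hs : ¬M.toCoxeterSystem.IsRightDescent w s) :
    IsPos (ρ w (sroot s)) ∧ ((coxGraph M).induce (supp (ρ w (sroot s)))).Connected := by
  induction hn : M.toCoxeterSystem.length w using Nat.strong_induction_on generalizing w s with
  | _ n ih =>
  rcases eq_or_ne w 1 with rfl | hw1
  · rw [map_one, Module.End.one_apply]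
    exact ⟨isPos_sroot s, connected_induce_supp_sroot M s⟩
  obtain ⟨t, ht⟩ := M.toCoxeterSystem.exists_rightDescent_of_ne_one hw1
  have hst : s ≠ t := by rintro rfl; exact hs ht
  obtain ⟨u, ω, hω, rfl, hlen, hus, hut⟩ := M.toCoxeterSystem.exists_dihedral_factorization s t w
  have hω0 : ω ≠ [] := by rintro rfl; simp at ht; exact hut ht
  have hu : M.toCoxeterSystem.length u < n := by
    have := List.length_pos_of_ne_nil hω0
    omega
  obtain ⟨hμ, hμc⟩ := ih _ hu u s hus rfl
  obtain ⟨hν, hνc⟩ := ih _ hu u t hut rfl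
  have hred := M.toCoxeterSystem.isReduced_concat_of_not_isRightDescent rfl hlen hs
  have hω' := M.toCoxeterSystem.eq_alternatingWord_of_isReduced_concat hω hred
  have hk : M s t = 0 ∨ ω.length + 1 ≤ M s t := by
    rw [M.symmetric]
    refine M.toCoxeterSystem.le_of_isReduced_alternatingWord ?_
    rwa [alternatingWord_succ, ← hω']
  have hne : ρ (u * M.toCoxeterSystem.wordProd ω) (sroot s) ≠ 0 := by
    simp [MonoidHom.apply_eq_zero_iff_of_group, sroot]
  rw [hω', map_mul, Module.End.mul_apply] at hne ⊢
  by_cases hadj : (coxGraph M).Adj s t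
  · obtain ⟨a, b, ha, hb, hab⟩ := hρ.exists_nonneg_apply_wordProd_alternatingWord hst hk
    rw [hab, map_add, map_smul, map_smul] at hne ⊢
    have hform : form M (ρ u (sroot s)) (ρ u (sroot t)) < 0 := by
      rw [hρ.form_apply_apply, form_sroot_sroot]
      exact pairing_neg_of_adj M hadj
    exact ⟨hμ.smul_add_smul hν ha hb,
      connected_induce_supp_smul_add_smul M hμ hν hμc hνc hform ha hb hne⟩
  · have h2 := eq_two_of_not_adj M hst hadj
    rw [hρ.apply_wordProd_alternatingWord_of_eq_two h2 (by omega)]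
    exact ⟨hμ, hμc⟩

theorem statement13 [DecidableEq B] [Fintype B] (M : CoxeterMatrix B)
    (ρ : M.Group →* Module.End ℝ (B → ℝ))
    (hρ : ∀ (s : B) (v : B → ℝ),
      ρ (M.simple s) v = v - (2 * form M v (sroot s)) • sroot s)
    (lam : B → ℝ) (hroot : IsRoot M ρ lam) :
    ((coxGraph M).induce (supp lam)).Connected := by
  have hρ' : IsGeometricRep M ρ := hρ
  obtain ⟨w, s, rfl⟩ := hroot
  by_cases hs : M.toCoxeterSystem.IsRightDescent w s
  · have hws : ¬M.toCoxeterSystem.IsRightDescent (w * M.simple s) s := by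
      rwa [M.toCoxeterSystem.isRightDescent_iff_not_isRightDescent_mul,
        CoxeterMatrix.toCoxeterSystem_simple] at hs
    have hneg : ρ (w * M.simple s) (sroot s) = -ρ w (sroot s) := by
      rw [map_mul, Module.End.mul_apply, hρ'.apply_simple_sroot_self, map_neg]
    rw [← supp_neg, ← hneg]
    exact (hρ'.isPos_and_connected_of_not_isRightDescent _ s hws).2
  · exact (hρ'.isPos_and_connected_of_not_isRightDescent w s hs).2
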